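/- Let N, G, l be natural numbers, let α, β, γ, δ be nonnegative reals, let K^m ∈ Matrix (Fin N) (Fin G) ℝ and K^c ∈ Matrix (Fin N) (Fin N) ℝ have all entries nonnegative with K^c symmetric, let Y^o ∈ Matrix (Fin N) (Fin l) ℝ, Y^g ∈ Matrix (Fin G) (Fin l) ℝ, and define P(F^o, F^g) = (α/2) ∑_{i,j} K^m_{ij} ‖F^o_{i·} − F^g_{j·}‖² + (β/2) ∑_{i,j} K^c_{ij} ‖F^o_{i·} − F^o_{j·}‖² + γ ∑_i ‖F^o_{i·} − Y^o_{i·}‖² + δ ∑_j ‖F^g_{j·} − Y^g_{j·}‖². Fix F^g, and assume that for every i < N we have α ∑_j K^m_{ij} + 2γ > 0. Then the function F^o ↦ P(F^o, F^g) is strictly convex on Matrix (Fin N) (Fin l) ℝ. -/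
import Mathlib


open scoped BigOperators

/-- Squared Euclidean norm of a vector in `ℝ^l`. -/
noncomputable def esqnorm {l : ℕ} (v : Fin l → ℝ) : ℝ :=
  ‖(WithLp.equiv 2 (Fin l → ℝ)).symm v‖ ^ 2

/-- The ensemble objective `P(F^o, F^g)` of problem (6) of the paper. -/
noncomputable def objP (N G l : ℕ) (α β γ δ : ℝ)
    (Km : Matrix (Fin N) (Fin G) ℝ) (Kc : Matrix (Fin N) (Fin N) ℝ)
    (Yo : Matrix (Fin N) (Fin l) ℝ) (Yg : Matrix (Fin G) (Fin l) ℝ)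
    (Fo : Matrix (Fin N) (Fin l) ℝ) (Fg : Matrix (Fin G) (Fin l) ℝ) : ℝ :=
  α / 2 * ∑ i, ∑ j, Km i j * esqnorm (Fo i - Fg j)
  + β / 2 * ∑ i, ∑ j, Kc i j * esqnorm (Fo i - Fo j)
  + γ * ∑ i, esqnorm (Fo i - Yo i)
  + δ * ∑ j, esqnorm (Fg j - Yg j)

lemma esqnorm_eq {l : ℕ} (v : Fin l → ℝ) : esqnorm v = ∑ k, v k ^ 2 := by
  rw [esqnorm, EuclideanSpace.norm_eq, Real.sq_sqrt]
  · simp [Real.norm_eq_abs, sq_abs]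
  · positivity

lemma esqnorm_nonneg {l : ℕ} (v : Fin l → ℝ) : 0 ≤ esqnorm v := by
  rw [esqnorm_eq]; positivity

lemma esqnorm_pos {l : ℕ} (v : Fin l → ℝ) (hv : v ≠ 0) : 0 < esqnorm v := by
  obtain ⟨k, hk⟩ : ∃ k, v k ≠ 0 := by
    by_contra h; push_neg at h; exact hv (funext h)
  rw [esqnorm_eq]
  exact Finset.sum_pos' (fun i _ => sq_nonneg _)
    ⟨k, Finset.mem_univ k, by positivity⟩

lemma esqnorm_combo {l : ℕ} (a b : ℝ) (hab : a + b = 1) (x y : Fin l → ℝ) :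
    esqnorm (a • x + b • y)
      = a * esqnorm x + b * esqnorm y - a * b * esqnorm (x - y) := by
  simp only [esqnorm_eq, Finset.mul_sum, ← Finset.sum_sub_distrib,
    ← Finset.sum_add_distrib]
  refine Finset.sum_congr rfl fun k _ => ?_
  simp only [Pi.add_apply, Pi.smul_apply, Pi.sub_apply, smul_eq_mul]
  have hb' : b = 1 - a := by linarith
  subst hb'; ring

lemma sum_split {ι : Type*} (s : Finset ι) (f g h : ι → ℝ) (a b c : ℝ) :
    ∑ i ∈ s, (a * f i + b * g i - c * h i)
      = a * ∑ i ∈ s, f i + b * ∑ i ∈ s, g i - c * ∑ i ∈ s, h i := by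
  simp [Finset.sum_add_distrib, Finset.sum_sub_distrib, Finset.mul_sum]

/-- Second half of Theorem 3 of the paper: with the group block `F^g` held
fixed, the objective as a function of the object block `F^o` is strictly
convex, provided `K^c` is symmetric and `α ∑_j K^m_{ij} + 2γ > 0` for every
object `i`. -/
theorem objP_strictConvexOn_object_block (N G l : ℕ) (α β γ δ : ℝ)
    (hα : 0 ≤ α) (hβ : 0 ≤ β) (hγ : 0 ≤ γ) (hδ : 0 ≤ δ)
    (Km : Matrix (Fin N) (Fin G) ℝ) (Kc : Matrix (Fin N) (Fin N) ℝ)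
    (hKm : ∀ i j, 0 ≤ Km i j) (hKc : ∀ i j, 0 ≤ Kc i j) (hKcsymm : Kc.IsSymm)
    (Yo : Matrix (Fin N) (Fin l) ℝ) (Yg : Matrix (Fin G) (Fin l) ℝ)
    (Fg : Matrix (Fin G) (Fin l) ℝ)
    (hden : ∀ i : Fin N, 0 < α * (∑ j, Km i j) + 2 * γ) :
    StrictConvexOn ℝ (Set.univ : Set (Matrix (Fin N) (Fin l) ℝ))
      (fun Fo : Matrix (Fin N) (Fin l) ℝ => objP N G l α β γ δ Km Kc Yo Yg Fo Fg) := by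
  refine ⟨convex_univ, fun x _ y _ hxy a b ha hb hab => ?_⟩
  set z : Matrix (Fin N) (Fin l) ℝ := x - y with hz
  -- row decompositions of the convex combination
  have hrow1 : ∀ (i : Fin N) (c : Fin l → ℝ),
      (a • x + b • y) i - c = a • (x i - c) + b • (y i - c) := by
    intro i c; funext k
    simp only [Matrix.add_apply, Matrix.smul_apply, Pi.sub_apply, Pi.add_apply,
      Pi.smul_apply, smul_eq_mul]
    have hb' : b = 1 - a := by linarith
    subst hb'; ring
  have hrow2 : ∀ (i j : Fin N),
      (a • x + b • y) i - (a • x + b • y) j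
        = a • (x i - x j) + b • (y i - y j) := by
    intro i j; funext k
    simp only [Matrix.add_apply, Matrix.smul_apply, Pi.sub_apply, Pi.add_apply,
      Pi.smul_apply, smul_eq_mul]
    ring
  -- combination identities for each esqnorm term
  have hc1 : ∀ (i : Fin N) (c : Fin l → ℝ),
      esqnorm ((a • x + b • y) i - c)
        = a * esqnorm (x i - c) + b * esqnorm (y i - c)
          - a * b * esqnorm (z i) := by
    intro i c
    have harg : x i - c - (y i - c) = z i := by
      funext k; simp only [hz, Pi.sub_apply, Matrix.sub_apply]; ring
    rw [hrow1 i c, esqnorm_combo a b hab, harg]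
  have hc2 : ∀ (i j : Fin N),
      esqnorm ((a • x + b • y) i - (a • x + b • y) j)
        = a * esqnorm (x i - x j) + b * esqnorm (y i - y j)
          - a * b * esqnorm (z i - z j) := by
    intro i j
    have harg : x i - x j - (y i - y j) = z i - z j := by
      funext k; simp only [hz, Pi.sub_apply, Matrix.sub_apply]; ring
    rw [hrow2 i j, esqnorm_combo a b hab, harg]
  -- the quadratic form in `z`
  set Q : ℝ := α / 2 * ∑ i, ∑ j, Km i j * esqnorm (z i)
      + β / 2 * ∑ i, ∑ j, Kc i j * esqnorm (z i - z j)
      + γ * ∑ i, esqnorm (z i) with hQ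
  -- the key combination identity for the objective
  have hkey : objP N G l α β γ δ Km Kc Yo Yg (a • x + b • y) Fg
      = a * objP N G l α β γ δ Km Kc Yo Yg x Fg
        + b * objP N G l α β γ δ Km Kc Yo Yg y Fg - a * b * Q := by
    have h1 : ∑ i, ∑ j, Km i j * esqnorm ((a • x + b • y) i - Fg j)
        = a * ∑ i, ∑ j, Km i j * esqnorm (x i - Fg j)
          + b * ∑ i, ∑ j, Km i j * esqnorm (y i - Fg j)
          - a * b * ∑ i, ∑ j, Km i j * esqnorm (z i) := by
      rw [← sum_split]
      refine Finset.sum_congr rfl fun i _ => ?_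
      rw [← sum_split]
      refine Finset.sum_congr rfl fun j _ => ?_
      rw [hc1 i (Fg j)]; ring
    have h2 : ∑ i, ∑ j, Kc i j * esqnorm ((a • x + b • y) i - (a • x + b • y) j)
        = a * ∑ i, ∑ j, Kc i j * esqnorm (x i - x j)
          + b * ∑ i, ∑ j, Kc i j * esqnorm (y i - y j)
          - a * b * ∑ i, ∑ j, Kc i j * esqnorm (z i - z j) := by
      rw [← sum_split]
      refine Finset.sum_congr rfl fun i _ => ?_
      rw [← sum_split]
      refine Finset.sum_congr rfl fun j _ => ?_
      rw [hc2 i j]; ring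
    have h3 : ∑ i, esqnorm ((a • x + b • y) i - Yo i)
        = a * ∑ i, esqnorm (x i - Yo i)
          + b * ∑ i, esqnorm (y i - Yo i)
          - a * b * ∑ i, esqnorm (z i) := by
      rw [← sum_split]
      refine Finset.sum_congr rfl fun i _ => ?_
      rw [hc1 i (Yo i)]
    simp only [objP, h1, h2, h3, hQ]
    have hb' : b = 1 - a := by linarith
    subst hb'; ring
  -- positivity of the quadratic form
  have hzne : z ≠ 0 := sub_ne_zero_of_ne hxy
  have hQpos : 0 < Q := by
    obtain ⟨i0, hi0⟩ : ∃ i, z i ≠ 0 := by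
      by_contra h; push_neg at h; exact hzne (funext h)
    have hβterm : 0 ≤ β / 2 * ∑ i, ∑ j, Kc i j * esqnorm (z i - z j) := by
      apply mul_nonneg (by linarith)
      exact Finset.sum_nonneg fun i _ => Finset.sum_nonneg fun j _ =>
        mul_nonneg (hKc i j) (esqnorm_nonneg _)
    have hmain : 0 < α / 2 * ∑ i, ∑ j, Km i j * esqnorm (z i)
        + γ * ∑ i, esqnorm (z i) := by
      have heq : α / 2 * ∑ i, ∑ j, Km i j * esqnorm (z i)
          + γ * ∑ i, esqnorm (z i)
          = ∑ i, (α / 2 * (∑ j, Km i j) + γ) * esqnorm (z i) := by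
        rw [show (∑ i, ∑ j, Km i j * esqnorm (z i))
              = ∑ i, (∑ j, Km i j) * esqnorm (z i) from
            Finset.sum_congr rfl fun i _ => (Finset.sum_mul _ _ _).symm,
          Finset.mul_sum, Finset.mul_sum, ← Finset.sum_add_distrib]
        exact Finset.sum_congr rfl fun i _ => by ring
      rw [heq]
      refine Finset.sum_pos' (fun i _ => ?_) ⟨i0, Finset.mem_univ i0, ?_⟩
      · have := hden i
        exact mul_nonneg (by linarith) (esqnorm_nonneg _)
      · have h1 := hden i0
        exact mul_pos (by linarith) (esqnorm_pos _ hi0)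
    rw [hQ]; linarith
  simp only [smul_eq_mul]
  rw [hkey]
  nlinarith [mul_pos (mul_pos ha hb) hQpos]
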